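/- Let γ > 0 and g > 0 satisfy 2γg > 1, and let h_{γ,g} : ℝ² → ℝ² be the C¹ regularizer defined by h_{γ,g}(z) = g z/|z| if γ|z| ≥ g + 1/(2γ); h_{γ,g}(z) = (z/|z|)(g − (γ/2)(g − γ|z| + 1/(2γ))²) if g − 1/(2γ) ≤ γ|z| ≤ g + 1/(2γ); and h_{γ,g}(z) = γ z if γ|z| ≤ g − 1/(2γ). Then h_{γ,g} is a monotone map: for all x, y ∈ ℝ², ⟨h_{γ,g}(x) − h_{γ,g}(y), x − y⟩ ≥ 0. -/

import Mathlib

/-!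
`h_{γ,g}(z) = (ρ(|z|)/|z|) z` with `ρ(r) = P(γ r)`, where `P` is the identity up to `g - 1/(2γ)`,
the constant `g` from `g + 1/(2γ)` on, and in between the parabola tangent to both at these
two points. So `P` is nondecreasing, and `P 0 = 0` once `2γg ≥ 1`. For any nondecreasing `ρ`
on `[0, ∞)` with `ρ 0 = 0`, the radial map `z ↦ (ρ(|z|)/|z|) z` is monotone: Cauchy–Schwarz
reduces `⟨·,·⟩` to `(ρ(|x|) - ρ(|y|)) (|x| - |y|) ≥ 0`.
-/

/-- The C¹ local regularization `h_{γ,g}` of the subdifferential of the Euclidean norm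
(equation (3.6) of the paper). -/
noncomputable def hreg (γ g : ℝ) (z : EuclideanSpace ℝ (Fin 2)) : EuclideanSpace ℝ (Fin 2) :=
  if g + 1 / (2 * γ) ≤ γ * ‖z‖ then (g / ‖z‖) • z
  else if g - 1 / (2 * γ) ≤ γ * ‖z‖ then
    ((g - γ / 2 * (g - γ * ‖z‖ + 1 / (2 * γ)) ^ 2) / ‖z‖) • z
  else γ • z

open Set

theorem inner_radial_sub_radial_nonneg {E : Type*} [NormedAddCommGroup E]
    [InnerProductSpace ℝ E] {ρ : ℝ → ℝ} (hρ : MonotoneOn ρ (Ici 0)) (hρ0 : ρ 0 = 0) (x y : E) :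
    0 ≤ (inner ℝ ((ρ ‖x‖ / ‖x‖) • x - (ρ ‖y‖ / ‖y‖) • y) (x - y) : ℝ) := by
  have hnonneg : ∀ r, 0 ≤ r → 0 ≤ ρ r / r := fun r hr =>
    div_nonneg (hρ0 ▸ hρ (mem_Ici.2 le_rfl) hr hr) hr
  have hcancel : ∀ r, ρ r / r * r = ρ r := by
    intro r
    rcases eq_or_ne r 0 with rfl | hr
    · simp [hρ0]
    · exact div_mul_cancel₀ _ hr
  set a := ‖x‖
  set b := ‖y‖
  calc 0 ≤ (ρ b - ρ a) * (b - a) :=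
        (hρ.monovaryOn monotoneOn_id).sub_mul_sub_nonneg (norm_nonneg x) (norm_nonneg y)
    _ = ρ a / a * a ^ 2 + ρ b / b * b ^ 2 - (ρ a / a + ρ b / b) * (a * b) := by
        linear_combination (b - a) * hcancel a - (b - a) * hcancel b
    _ ≤ ρ a / a * a ^ 2 + ρ b / b * b ^ 2 - (ρ a / a + ρ b / b) * inner ℝ x y := by
        gcongr
        · exact add_nonneg (hnonneg a (norm_nonneg x)) (hnonneg b (norm_nonneg y))
        · exact real_inner_le_norm x y
    _ = inner ℝ ((ρ a / a) • x - (ρ b / b) • y) (x - y) := by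
        simp only [inner_sub_left, inner_sub_right, real_inner_smul_left,
          real_inner_self_eq_norm_sq, real_inner_comm x y]
        ring

noncomputable def hregProfile (γ g u : ℝ) : ℝ :=
  if g + 1 / (2 * γ) ≤ u then g
  else if g - 1 / (2 * γ) ≤ u then g - γ / 2 * (g - u + 1 / (2 * γ)) ^ 2
  else u

theorem hreg_eq_smul (γ g : ℝ) (z : EuclideanSpace ℝ (Fin 2)) :
    hreg γ g z = (hregProfile γ g (γ * ‖z‖) / ‖z‖) • z := by
  rcases eq_or_ne z 0 with rfl | hz
  · unfold hreg
    split_ifs <;> simp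
  · unfold hreg hregProfile
    split_ifs
    · rfl
    · rfl
    · rw [mul_div_assoc, div_self (norm_ne_zero_iff.mpr hz), mul_one]

section Profile

variable {γ g : ℝ}

theorem hregProfile_of_le (hγ : 0 < γ) {u : ℝ} (hu : u ≤ g - 1 / (2 * γ)) :
    hregProfile γ g u = u := by
  have hc : 0 < 1 / (2 * γ) := by positivity
  unfold hregProfile
  rw [if_neg (by linarith)]
  split_ifs with h
  · have hu : u = g - 1 / (2 * γ) := le_antisymm hu h
    subst hu
    field_simp
    ring
  · rfl

theorem hregProfile_of_mem_Icc {u : ℝ}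
    (hu : u ∈ Icc (g - 1 / (2 * γ)) (g + 1 / (2 * γ))) :
    hregProfile γ g u = g - γ / 2 * (g - u + 1 / (2 * γ)) ^ 2 := by
  unfold hregProfile
  by_cases h₁ : g + 1 / (2 * γ) ≤ u
  · have hu : u = g + 1 / (2 * γ) := le_antisymm hu.2 h₁
    subst hu
    simp
  · rw [if_neg h₁, if_pos hu.1]

theorem hregProfile_of_ge {u : ℝ} (hu : g + 1 / (2 * γ) ≤ u) : hregProfile γ g u = g :=
  if_pos hu

theorem hregProfile_monotone (hγ : 0 < γ) : Monotone (hregProfile γ g) := by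
  have hc : 0 < 1 / (2 * γ) := by positivity
  have hlow : MonotoneOn (hregProfile γ g) (Iic (g - 1 / (2 * γ))) := by
    intro u hu v hv huv
    rwa [hregProfile_of_le hγ hu, hregProfile_of_le hγ hv]
  have hmid : MonotoneOn (hregProfile γ g) (Icc (g - 1 / (2 * γ)) (g + 1 / (2 * γ))) := by
    intro u hu v hv huv
    rw [hregProfile_of_mem_Icc hu, hregProfile_of_mem_Icc hv]
    have hv' : 0 ≤ g - v + 1 / (2 * γ) := by linarith [hv.2]
    gcongr
  have hhigh : MonotoneOn (hregProfile γ g) (Ici (g + 1 / (2 * γ))) := by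
    intro u hu v hv _
    rw [hregProfile_of_ge hu, hregProfile_of_ge hv]
  refine hlow.Iic_union_Ici ?_
  rw [← Icc_union_Ici_eq_Ici (by linarith : g - 1 / (2 * γ) ≤ g + 1 / (2 * γ))]
  exact hmid.union_right hhigh (isGreatest_Icc (by linarith)) isLeast_Ici

end Profile

theorem hreg_monotone_general (γ g : ℝ) (hγ : 0 < γ) (hγg : 1 < 2 * γ * g)
    (x y : EuclideanSpace ℝ (Fin 2)) :
    0 ≤ (inner ℝ (hreg γ g x - hreg γ g y) (x - y) : ℝ) := by
  have hzero : hregProfile γ g (γ * 0) = 0 := by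
    have hle : 0 ≤ g - 1 / (2 * γ) := by
      rw [sub_nonneg, div_le_iff₀ (by positivity)]
      linarith
    rw [mul_zero, hregProfile_of_le hγ hle]
  have hmono : MonotoneOn (fun r => hregProfile γ g (γ * r)) (Ici 0) :=
    ((hregProfile_monotone hγ).comp (monotone_id.const_mul hγ.le)).monotoneOn _
  rw [hreg_eq_smul, hreg_eq_smul]
  exact inner_radial_sub_radial_nonneg hmono hzero x y

/-- For γ > 0, g > 0 with 2γg > 1, the map `h_{γ,g}` is monotone:
`⟨h_{γ,g}(x) − h_{γ,g}(y), x − y⟩ ≥ 0` for all x, y ∈ ℝ². -/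
theorem hreg_monotone (γ g : ℝ) (hγ : 0 < γ) (hg : 0 < g) (hγg : 1 < 2 * γ * g)
    (x y : EuclideanSpace ℝ (Fin 2)) :
    0 ≤ (inner ℝ (hreg γ g x - hreg γ g y) (x - y) : ℝ) :=
  hreg_monotone_general γ g hγ hγg x y
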